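/- arXiv:2503.11192 — 3 statements merged into one kernel-verified Lean document; each statement's English description precedes it below -/
import Mathlib

section
/- Let ε > 0 and let ρ⁰, ρ¹, ρ², p⁰, p¹, p² : ℝ² × ℝ → ℝ and u⁰, u¹, u² : ℝ² × ℝ → ℝ² be continuously differentiable. Suppose that for every M ∈ (0, ε), the fields ρ_M = ρ⁰ + M ρ¹ + M² ρ², u_M = u⁰ + M u¹ + M² u², p_M = p⁰ + M p¹ + M² p² satisfy the non-dimensional mixture momentum equation ∂_t(ρ_M u_M) + div(ρ_M u_M ⊗ u_M) + (1/M²) ∇p_M = 0 at every point of ℝ² × ℝ. Then the spatial gradient of the leading-order pressure vanishes identically: ∇p⁰(x, t) = 0 for all (x, t) ∈ ℝ² × ℝ. -/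
open Filter Topology


/-- Space–time: a point of `ℝ² × ℝ`, written as `((x, y), t)`. -/
abbrev SpaceTime : Type := (ℝ × ℝ) × ℝ

/-- Spatial partial derivative in the first space direction. -/
noncomputable def pdX (f : SpaceTime → ℝ) (z : SpaceTime) : ℝ :=
  deriv (fun s : ℝ => f ((s, z.1.2), z.2)) z.1.1

/-- Spatial partial derivative in the second space direction. -/
noncomputable def pdY (f : SpaceTime → ℝ) (z : SpaceTime) : ℝ :=
  deriv (fun s : ℝ => f ((z.1.1, s), z.2)) z.1.2

/-- Time derivative. -/
noncomputable def pdT (f : SpaceTime → ℝ) (z : SpaceTime) : ℝ :=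
  deriv (fun s : ℝ => f (z.1, s)) z.2

/-- The non-dimensional mixture momentum equation
`∂ₜ(ρ u) + div(ρ u ⊗ u) + (1/M²) ∇p = 0`, written componentwise. -/
def MomentumEq (ρ p : SpaceTime → ℝ) (u : SpaceTime → ℝ × ℝ) (M : ℝ) : Prop :=
  ∀ z : SpaceTime,
    (pdT (fun w => ρ w * (u w).1) z
      + pdX (fun w => ρ w * (u w).1 * (u w).1) z
      + pdY (fun w => ρ w * (u w).1 * (u w).2) z
      + (1 / M ^ 2) * pdX p z = 0)
    ∧
    (pdT (fun w => ρ w * (u w).2) z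
      + pdX (fun w => ρ w * (u w).2 * (u w).1) z
      + pdY (fun w => ρ w * (u w).2 * (u w).2) z
      + (1 / M ^ 2) * pdY p z = 0)

/-- Low-Mach asymptotic expansion `φ_M = φ⁰ + M φ¹ + M² φ²` of a scalar field. -/
def expand (f0 f1 f2 : SpaceTime → ℝ) (M : ℝ) : SpaceTime → ℝ :=
  fun z => f0 z + M * f1 z + M ^ 2 * f2 z

/-- Low-Mach asymptotic expansion of a vector (velocity) field. -/
def expandV (u0 u1 u2 : SpaceTime → ℝ × ℝ) (M : ℝ) : SpaceTime → ℝ × ℝ :=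
  fun z => u0 z + M • u1 z + M ^ 2 • u2 z

def jexpand (f0 f1 f2 : SpaceTime → ℝ) : SpaceTime × ℝ → ℝ :=
  fun q => f0 q.1 + q.2 * f1 q.1 + q.2 ^ 2 * f2 q.1

lemma jexpand_apply (f0 f1 f2 : SpaceTime → ℝ) (M : ℝ) (w : SpaceTime) :
    jexpand f0 f1 f2 (w, M) = expand f0 f1 f2 M w := rfl

lemma contDiff_jexpand {f0 f1 f2 : SpaceTime → ℝ}
    (h0 : ContDiff ℝ 1 f0) (h1 : ContDiff ℝ 1 f1) (h2 : ContDiff ℝ 1 f2) :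
    ContDiff ℝ 1 (jexpand f0 f1 f2) := by
  unfold jexpand
  exact ((h0.comp contDiff_fst).add (contDiff_snd.mul (h1.comp contDiff_fst))).add
    ((contDiff_snd.pow 2).mul (h2.comp contDiff_fst))

lemma expandV_fst (u0 u1 u2 : SpaceTime → ℝ × ℝ) (M : ℝ) (w : SpaceTime) :
    (expandV u0 u1 u2 M w).1
      = expand (fun w => (u0 w).1) (fun w => (u1 w).1) (fun w => (u2 w).1) M w := by
  simp [expandV, expand, smul_eq_mul]

lemma expandV_snd (u0 u1 u2 : SpaceTime → ℝ × ℝ) (M : ℝ) (w : SpaceTime) :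
    (expandV u0 u1 u2 M w).2
      = expand (fun w => (u0 w).2) (fun w => (u1 w).2) (fun w => (u2 w).2) M w := by
  simp [expandV, expand, smul_eq_mul]

lemma cont_deriv_param (F : SpaceTime × ℝ → ℝ) (hF : ContDiff ℝ 1 F)
    (L : ℝ → SpaceTime) (v : SpaceTime) (hL : ∀ s, HasDerivAt L v s) (s₀ : ℝ) :
    Continuous (fun M : ℝ => deriv (fun s => F (L s, M)) s₀) := by
  have key : ∀ M : ℝ, deriv (fun s => F (L s, M)) s₀
      = fderiv ℝ F (L s₀, M) (v, 0) := by
    intro M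
    have hline : HasDerivAt (fun s => (L s, M)) ((v, (0:ℝ)) : SpaceTime × ℝ) s₀ :=
      (hL s₀).prodMk (hasDerivAt_const s₀ M)
    have hFd : HasFDerivAt F (fderiv ℝ F (L s₀, M)) (L s₀, M) :=
      (hF.differentiable one_ne_zero _).hasFDerivAt
    exact (hFd.comp_hasDerivAt s₀ hline).deriv
  simp_rw [key]
  exact ((hF.continuous_fderiv one_ne_zero).comp
    (continuous_const.prodMk continuous_id)).clm_apply continuous_const

lemma limit_zero (g T : ℝ → ℝ) (hg : Continuous g) (hT : Continuous T)
    (ε : ℝ) (hε : 0 < ε)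
    (h : ∀ M ∈ Set.Ioo (0:ℝ) ε, T M + (1 / M ^ 2) * g M = 0) : g 0 = 0 := by
  have h1 : Tendsto g (𝓝[>] (0:ℝ)) (𝓝 (g 0)) :=
    (hg.tendsto 0).mono_left nhdsWithin_le_nhds
  have h2 : Tendsto (fun M : ℝ => -(M ^ 2 * T M)) (𝓝[>] (0:ℝ)) (𝓝 0) := by
    have := (((continuous_pow 2).mul hT).neg.tendsto 0).mono_left
      (nhdsWithin_le_nhds (s := Set.Ioi (0:ℝ)))
    convert this using 2
    all_goals simp
  have heq : g =ᶠ[𝓝[>] (0:ℝ)] fun M => -(M ^ 2 * T M) := by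
    filter_upwards [Ioo_mem_nhdsGT_of_mem (by constructor <;> [exact le_refl 0; exact hε] : (0:ℝ) ∈ Set.Ico 0 ε)] with M hM
    have hM0 : (M:ℝ) ≠ 0 := ne_of_gt hM.1
    have h' := h M hM
    field_simp at h'
    linear_combination h'
  exact tendsto_nhds_unique h1 (Tendsto.congr' heq.symm h2)

/-- If the expanded fields satisfy the non-dimensional mixture momentum equation for
every Mach number `M ∈ (0, ε)`, then the spatial gradient of the leading-order
pressure `p⁰` vanishes identically. -/
theorem grad_p0_vanishes
    (ε : ℝ) (hε : 0 < ε)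
    (ρ0 ρ1 ρ2 p0 p1 p2 : SpaceTime → ℝ) (u0 u1 u2 : SpaceTime → ℝ × ℝ)
    (hρ0 : ContDiff ℝ 1 ρ0) (hρ1 : ContDiff ℝ 1 ρ1) (hρ2 : ContDiff ℝ 1 ρ2)
    (hp0 : ContDiff ℝ 1 p0) (hp1 : ContDiff ℝ 1 p1) (hp2 : ContDiff ℝ 1 p2)
    (hu0 : ContDiff ℝ 1 u0) (hu1 : ContDiff ℝ 1 u1) (hu2 : ContDiff ℝ 1 u2)
    (hmom : ∀ M : ℝ, M ∈ Set.Ioo 0 ε →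
      MomentumEq (expand ρ0 ρ1 ρ2 M) (expand p0 p1 p2 M) (expandV u0 u1 u2 M) M) :
    ∀ z : SpaceTime, pdX p0 z = 0 ∧ pdY p0 z = 0 := by
  intro z
  have hR : ContDiff ℝ 1 (jexpand ρ0 ρ1 ρ2) := contDiff_jexpand hρ0 hρ1 hρ2
  have hP : ContDiff ℝ 1 (jexpand p0 p1 p2) := contDiff_jexpand hp0 hp1 hp2
  have hU1 : ContDiff ℝ 1
      (jexpand (fun w => (u0 w).1) (fun w => (u1 w).1) (fun w => (u2 w).1)) :=
    contDiff_jexpand hu0.fst hu1.fst hu2.fst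
  have hU2 : ContDiff ℝ 1
      (jexpand (fun w => (u0 w).2) (fun w => (u1 w).2) (fun w => (u2 w).2)) :=
    contDiff_jexpand hu0.snd hu1.snd hu2.snd
  have hLX : ∀ s : ℝ, HasDerivAt (fun s : ℝ => ((((s, z.1.2), z.2)) : SpaceTime))
      (((((1:ℝ),(0:ℝ)),(0:ℝ))) : SpaceTime) s :=
    fun s => ((hasDerivAt_id s).prodMk (hasDerivAt_const s z.1.2)).prodMk (hasDerivAt_const s z.2)
  have hLY : ∀ s : ℝ, HasDerivAt (fun s : ℝ => ((((z.1.1, s), z.2)) : SpaceTime))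
      (((((0:ℝ),(1:ℝ)),(0:ℝ))) : SpaceTime) s :=
    fun s => ((hasDerivAt_const s z.1.1).prodMk (hasDerivAt_id s)).prodMk (hasDerivAt_const s z.2)
  have hLT : ∀ s : ℝ, HasDerivAt (fun s : ℝ => (((z.1, s)) : SpaceTime))
      (((((0:ℝ),(0:ℝ)),(1:ℝ))) : SpaceTime) s :=
    fun s => (hasDerivAt_const s z.1).prodMk (hasDerivAt_id s)
  -- continuity of the pressure-gradient slices in M
  have cgX : Continuous (fun M : ℝ =>
      deriv (fun s => jexpand p0 p1 p2 (((s, z.1.2), z.2), M)) z.1.1) :=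
    cont_deriv_param _ hP _ _ hLX z.1.1
  have cgY : Continuous (fun M : ℝ =>
      deriv (fun s => jexpand p0 p1 p2 (((z.1.1, s), z.2), M)) z.1.2) :=
    cont_deriv_param _ hP _ _ hLY z.1.2
  -- continuity of the momentum terms in M : first component
  have cT1X : Continuous (fun M : ℝ => deriv (fun s =>
      jexpand ρ0 ρ1 ρ2 ((z.1, s), M)
        * jexpand (fun w => (u0 w).1) (fun w => (u1 w).1) (fun w => (u2 w).1) ((z.1, s), M)) z.2) :=
    cont_deriv_param _ (hR.mul hU1) _ _ hLT z.2
  have cT2X : Continuous (fun M : ℝ => deriv (fun s =>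
      jexpand ρ0 ρ1 ρ2 (((s, z.1.2), z.2), M)
        * jexpand (fun w => (u0 w).1) (fun w => (u1 w).1) (fun w => (u2 w).1) (((s, z.1.2), z.2), M)
        * jexpand (fun w => (u0 w).1) (fun w => (u1 w).1) (fun w => (u2 w).1) (((s, z.1.2), z.2), M)) z.1.1) :=
    cont_deriv_param _ ((hR.mul hU1).mul hU1) _ _ hLX z.1.1
  have cT3X : Continuous (fun M : ℝ => deriv (fun s =>
      jexpand ρ0 ρ1 ρ2 (((z.1.1, s), z.2), M)
        * jexpand (fun w => (u0 w).1) (fun w => (u1 w).1) (fun w => (u2 w).1) (((z.1.1, s), z.2), M)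
        * jexpand (fun w => (u0 w).2) (fun w => (u1 w).2) (fun w => (u2 w).2) (((z.1.1, s), z.2), M)) z.1.2) :=
    cont_deriv_param _ ((hR.mul hU1).mul hU2) _ _ hLY z.1.2
  -- continuity of the momentum terms in M : second component
  have cT1Y : Continuous (fun M : ℝ => deriv (fun s =>
      jexpand ρ0 ρ1 ρ2 ((z.1, s), M)
        * jexpand (fun w => (u0 w).2) (fun w => (u1 w).2) (fun w => (u2 w).2) ((z.1, s), M)) z.2) :=
    cont_deriv_param _ (hR.mul hU2) _ _ hLT z.2
  have cT2Y : Continuous (fun M : ℝ => deriv (fun s =>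
      jexpand ρ0 ρ1 ρ2 (((s, z.1.2), z.2), M)
        * jexpand (fun w => (u0 w).2) (fun w => (u1 w).2) (fun w => (u2 w).2) (((s, z.1.2), z.2), M)
        * jexpand (fun w => (u0 w).1) (fun w => (u1 w).1) (fun w => (u2 w).1) (((s, z.1.2), z.2), M)) z.1.1) :=
    cont_deriv_param _ ((hR.mul hU2).mul hU1) _ _ hLX z.1.1
  have cT3Y : Continuous (fun M : ℝ => deriv (fun s =>
      jexpand ρ0 ρ1 ρ2 (((z.1.1, s), z.2), M)
        * jexpand (fun w => (u0 w).2) (fun w => (u1 w).2) (fun w => (u2 w).2) (((z.1.1, s), z.2), M)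
        * jexpand (fun w => (u0 w).2) (fun w => (u1 w).2) (fun w => (u2 w).2) (((z.1.1, s), z.2), M)) z.1.2) :=
    cont_deriv_param _ ((hR.mul hU2).mul hU2) _ _ hLY z.1.2
  -- the momentum equation, rewritten with the joint fields : first component
  have hXeq : ∀ M ∈ Set.Ioo (0:ℝ) ε,
      (fun M : ℝ =>
        deriv (fun s =>
          jexpand ρ0 ρ1 ρ2 ((z.1, s), M)
            * jexpand (fun w => (u0 w).1) (fun w => (u1 w).1) (fun w => (u2 w).1) ((z.1, s), M)) z.2
        + deriv (fun s =>
          jexpand ρ0 ρ1 ρ2 (((s, z.1.2), z.2), M)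
            * jexpand (fun w => (u0 w).1) (fun w => (u1 w).1) (fun w => (u2 w).1) (((s, z.1.2), z.2), M)
            * jexpand (fun w => (u0 w).1) (fun w => (u1 w).1) (fun w => (u2 w).1) (((s, z.1.2), z.2), M)) z.1.1
        + deriv (fun s =>
          jexpand ρ0 ρ1 ρ2 (((z.1.1, s), z.2), M)
            * jexpand (fun w => (u0 w).1) (fun w => (u1 w).1) (fun w => (u2 w).1) (((z.1.1, s), z.2), M)
            * jexpand (fun w => (u0 w).2) (fun w => (u1 w).2) (fun w => (u2 w).2) (((z.1.1, s), z.2), M)) z.1.2) M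
      + (1 / M ^ 2) *
        (fun M : ℝ => deriv (fun s => jexpand p0 p1 p2 (((s, z.1.2), z.2), M)) z.1.1) M = 0 := by
    intro M hM
    have h := (hmom M hM z).1
    simp only [pdT, pdX, pdY, expandV_fst, expandV_snd] at h
    simp only [jexpand_apply]
    exact h
  have hYeq : ∀ M ∈ Set.Ioo (0:ℝ) ε,
      (fun M : ℝ =>
        deriv (fun s =>
          jexpand ρ0 ρ1 ρ2 ((z.1, s), M)
            * jexpand (fun w => (u0 w).2) (fun w => (u1 w).2) (fun w => (u2 w).2) ((z.1, s), M)) z.2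
        + deriv (fun s =>
          jexpand ρ0 ρ1 ρ2 (((s, z.1.2), z.2), M)
            * jexpand (fun w => (u0 w).2) (fun w => (u1 w).2) (fun w => (u2 w).2) (((s, z.1.2), z.2), M)
            * jexpand (fun w => (u0 w).1) (fun w => (u1 w).1) (fun w => (u2 w).1) (((s, z.1.2), z.2), M)) z.1.1
        + deriv (fun s =>
          jexpand ρ0 ρ1 ρ2 (((z.1.1, s), z.2), M)
            * jexpand (fun w => (u0 w).2) (fun w => (u1 w).2) (fun w => (u2 w).2) (((z.1.1, s), z.2), M)
            * jexpand (fun w => (u0 w).2) (fun w => (u1 w).2) (fun w => (u2 w).2) (((z.1.1, s), z.2), M)) z.1.2) M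
      + (1 / M ^ 2) *
        (fun M : ℝ => deriv (fun s => jexpand p0 p1 p2 (((z.1.1, s), z.2), M)) z.1.2) M = 0 := by
    intro M hM
    have h := (hmom M hM z).2
    simp only [pdT, pdX, pdY, expandV_fst, expandV_snd] at h
    simp only [jexpand_apply]
    exact h
  have hX0 : deriv (fun s => jexpand p0 p1 p2 (((s, z.1.2), z.2), 0)) z.1.1 = 0 :=
    limit_zero _ _ cgX ((cT1X.add cT2X).add cT3X) ε hε hXeq
  have hY0 : deriv (fun s => jexpand p0 p1 p2 (((z.1.1, s), z.2), 0)) z.1.2 = 0 :=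
    limit_zero _ _ cgY ((cT1Y.add cT2Y).add cT3Y) ε hε hYeq
  constructor
  · have e : pdX p0 z = deriv (fun s => jexpand p0 p1 p2 (((s, z.1.2), z.2), 0)) z.1.1 := by
      unfold pdX
      congr 1
      funext s
      simp [jexpand]
    exact e.trans hX0
  · have e : pdY p0 z = deriv (fun s => jexpand p0 p1 p2 (((z.1.1, s), z.2), 0)) z.1.2 := by
      unfold pdY
      congr 1
      funext s
      simp [jexpand]
    exact e.trans hY0
end

section
/- Let ε > 0 and let ρ⁰, ρ¹, ρ², p⁰, p¹, p² : ℝ² × ℝ → ℝ and u⁰, u¹, u² : ℝ² × ℝ → ℝ² be continuously differentiable. Suppose that for every M ∈ (0, ε), the fields ρ_M = ρ⁰ + M ρ¹ + M² ρ², u_M = u⁰ + M u¹ + M² u², p_M = p⁰ + M p¹ + M² p² satisfy the non-dimensional mixture momentum equation ∂_t(ρ_M u_M) + div(ρ_M u_M ⊗ u_M) + (1/M²) ∇p_M = 0 at every point of ℝ² × ℝ. Then the spatial gradient of the first-order pressure vanishes identically: ∇p¹(x, t) = 0 for all (x, t) ∈ ℝ² × ℝ. -/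
open Set Filter Topology

private lemma vanish_at_zero {ε : ℝ} (hε : 0 < ε) {ψ : ℝ → ℝ} (hψ : Continuous ψ)
    (h : ∀ M ∈ Set.Ioo (0:ℝ) ε, ψ M = 0) : ψ 0 = 0 := by
  have hne : (𝓝[Set.Ioo (0:ℝ) ε] 0).NeBot := by
    rw [nhdsWithin_Ioo_eq_nhdsGT hε]
    infer_instance
  have h1 : Tendsto ψ (𝓝[Set.Ioo (0:ℝ) ε] 0) (𝓝 (ψ 0)) :=
    (hψ.tendsto 0).mono_left nhdsWithin_le_nhds
  have h2 : Tendsto ψ (𝓝[Set.Ioo (0:ℝ) ε] 0) (𝓝 0) := by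
    refine Tendsto.congr' ?_ tendsto_const_nhds
    filter_upwards [self_mem_nhdsWithin] with M hM
    exact (h M hM).symm
  exact tendsto_nhds_unique h1 h2

private lemma coeff1_zero {ε : ℝ} (hε : 0 < ε) {Φ : ℝ → ℝ} (hΦ : Continuous Φ)
    {a b c : ℝ}
    (h : ∀ M ∈ Set.Ioo (0:ℝ) ε, M ^ 2 * Φ M + (a + M * b + M ^ 2 * c) = 0) : b = 0 := by
  have hc1 : Continuous fun M : ℝ => M ^ 2 * Φ M + (a + M * b + M ^ 2 * c) := by
    fun_prop
  have ha : a = 0 := by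
    have := vanish_at_zero hε hc1 h
    simpa using this
  have hc2 : Continuous fun M : ℝ => M * Φ M + (b + M * c) := by fun_prop
  have hb := vanish_at_zero hε hc2 (fun M hM => by
    have h1 := h M hM
    have hM0 : M ≠ 0 := ne_of_gt hM.1
    rw [ha] at h1
    have h2 : M * (M * Φ M + (b + M * c)) = 0 := by linear_combination h1
    exact (mul_eq_zero.mp h2).resolve_left hM0)
  simpa using hb

private lemma pdT_eq (G : ℝ × SpaceTime → ℝ) (hG : ContDiff ℝ 1 G) (M : ℝ) (z : SpaceTime) :
    pdT (fun w => G (M, w)) z = fderiv ℝ G (M, z) (0, (0, 1)) := by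
  have hcurve : HasDerivAt (fun s : ℝ => ((M, (z.1, s)) : ℝ × SpaceTime)) (0, (0, 1)) z.2 :=
    (hasDerivAt_const _ _).prodMk ((hasDerivAt_const _ _).prodMk (hasDerivAt_id' _))
  have h := ((hG.differentiable one_ne_zero) (M, z)).hasFDerivAt.comp_hasDerivAt z.2 hcurve
  exact h.deriv

private lemma pdX_eq (G : ℝ × SpaceTime → ℝ) (hG : ContDiff ℝ 1 G) (M : ℝ) (z : SpaceTime) :
    pdX (fun w => G (M, w)) z = fderiv ℝ G (M, z) (0, ((1, 0), 0)) := by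
  have hcurve : HasDerivAt (fun s : ℝ => ((M, ((s, z.1.2), z.2)) : ℝ × SpaceTime))
      (0, ((1, 0), 0)) z.1.1 :=
    (hasDerivAt_const _ _).prodMk
      (((hasDerivAt_id' _).prodMk (hasDerivAt_const _ _)).prodMk (hasDerivAt_const _ _))
  have h := ((hG.differentiable one_ne_zero) (M, z)).hasFDerivAt.comp_hasDerivAt z.1.1 hcurve
  exact h.deriv

private lemma pdY_eq (G : ℝ × SpaceTime → ℝ) (hG : ContDiff ℝ 1 G) (M : ℝ) (z : SpaceTime) :
    pdY (fun w => G (M, w)) z = fderiv ℝ G (M, z) (0, ((0, 1), 0)) := by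
  have hcurve : HasDerivAt (fun s : ℝ => ((M, ((z.1.1, s), z.2)) : ℝ × SpaceTime))
      (0, ((0, 1), 0)) z.1.2 :=
    (hasDerivAt_const _ _).prodMk
      (((hasDerivAt_const _ _).prodMk (hasDerivAt_id' _)).prodMk (hasDerivAt_const _ _))
  have h := ((hG.differentiable one_ne_zero) (M, z)).hasFDerivAt.comp_hasDerivAt z.1.2 hcurve
  exact h.deriv

private lemma hasDerivAt_pdX (f : SpaceTime → ℝ) (hf : ContDiff ℝ 1 f) (z : SpaceTime) :
    HasDerivAt (fun s : ℝ => f ((s, z.1.2), z.2)) (pdX f z) z.1.1 := by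
  have hcurve : HasDerivAt (fun s : ℝ => (((s, z.1.2), z.2) : SpaceTime)) ((1, 0), 0) z.1.1 :=
    ((hasDerivAt_id' _).prodMk (hasDerivAt_const _ _)).prodMk (hasDerivAt_const _ _)
  have h := ((hf.differentiable one_ne_zero) z).hasFDerivAt.comp_hasDerivAt z.1.1 hcurve
  have h2 : pdX f z = fderiv ℝ f z ((1, 0), 0) := h.deriv
  rw [h2]; exact h

private lemma hasDerivAt_pdY (f : SpaceTime → ℝ) (hf : ContDiff ℝ 1 f) (z : SpaceTime) :
    HasDerivAt (fun s : ℝ => f ((z.1.1, s), z.2)) (pdY f z) z.1.2 := by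
  have hcurve : HasDerivAt (fun s : ℝ => (((z.1.1, s), z.2) : SpaceTime)) ((0, 1), 0) z.1.2 :=
    ((hasDerivAt_const _ _).prodMk (hasDerivAt_id' _)).prodMk (hasDerivAt_const _ _)
  have h := ((hf.differentiable one_ne_zero) z).hasFDerivAt.comp_hasDerivAt z.1.2 hcurve
  have h2 : pdY f z = fderiv ℝ f z ((0, 1), 0) := h.deriv
  rw [h2]; exact h

private lemma cont_fderiv_apply (G : ℝ × SpaceTime → ℝ) (hG : ContDiff ℝ 1 G)
    (z : SpaceTime) (v : ℝ × SpaceTime) :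
    Continuous fun M : ℝ => fderiv ℝ G (M, z) v := by
  have h1 : Continuous fun M : ℝ => fderiv ℝ G (M, z) :=
    (hG.continuous_fderiv one_ne_zero).comp (continuous_id.prodMk continuous_const)
  exact h1.clm_apply continuous_const

private lemma pdX_expand (p0 p1 p2 : SpaceTime → ℝ) (h0 : ContDiff ℝ 1 p0)
    (h1 : ContDiff ℝ 1 p1) (h2 : ContDiff ℝ 1 p2) (M : ℝ) (z : SpaceTime) :
    pdX (expand p0 p1 p2 M) z = pdX p0 z + M * pdX p1 z + M ^ 2 * pdX p2 z := by
  have h := ((hasDerivAt_pdX p0 h0 z).add ((hasDerivAt_pdX p1 h1 z).const_mul M)).add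
    ((hasDerivAt_pdX p2 h2 z).const_mul (M ^ 2))
  exact h.deriv

private lemma pdY_expand (p0 p1 p2 : SpaceTime → ℝ) (h0 : ContDiff ℝ 1 p0)
    (h1 : ContDiff ℝ 1 p1) (h2 : ContDiff ℝ 1 p2) (M : ℝ) (z : SpaceTime) :
    pdY (expand p0 p1 p2 M) z = pdY p0 z + M * pdY p1 z + M ^ 2 * pdY p2 z := by
  have h := ((hasDerivAt_pdY p0 h0 z).add ((hasDerivAt_pdY p1 h1 z).const_mul M)).add
    ((hasDerivAt_pdY p2 h2 z).const_mul (M ^ 2))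
  exact h.deriv

private lemma contDiff_expandQ {f0 f1 f2 : SpaceTime → ℝ} (h0 : ContDiff ℝ 1 f0)
    (h1 : ContDiff ℝ 1 f1) (h2 : ContDiff ℝ 1 f2) :
    ContDiff ℝ 1 (fun q : ℝ × SpaceTime => expand f0 f1 f2 q.1 q.2) := by
  simp only [expand]
  exact ((h0.comp contDiff_snd).add (contDiff_fst.mul (h1.comp contDiff_snd))).add
    ((contDiff_fst.pow 2).mul (h2.comp contDiff_snd))

/-- Generic one-component argument. -/
private lemma comp_aux {ε : ℝ} (hε : 0 < ε)
    {r0 r1 r2 a0 a1 a2 c0 c1 c2 d0 d1 d2 : SpaceTime → ℝ}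
    (hr0 : ContDiff ℝ 1 r0) (hr1 : ContDiff ℝ 1 r1) (hr2 : ContDiff ℝ 1 r2)
    (ha0 : ContDiff ℝ 1 a0) (ha1 : ContDiff ℝ 1 a1) (ha2 : ContDiff ℝ 1 a2)
    (hc0 : ContDiff ℝ 1 c0) (hc1 : ContDiff ℝ 1 c1) (hc2 : ContDiff ℝ 1 c2)
    (hd0 : ContDiff ℝ 1 d0) (hd1 : ContDiff ℝ 1 d1) (hd2 : ContDiff ℝ 1 d2)
    {A B C : ℝ} (z : SpaceTime)
    (h : ∀ M ∈ Set.Ioo (0:ℝ) ε,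
      pdT (fun w => expand r0 r1 r2 M w * expand a0 a1 a2 M w) z
      + pdX (fun w => expand r0 r1 r2 M w * expand a0 a1 a2 M w * expand c0 c1 c2 M w) z
      + pdY (fun w => expand r0 r1 r2 M w * expand a0 a1 a2 M w * expand d0 d1 d2 M w) z
      + (1 / M ^ 2) * (A + M * B + M ^ 2 * C) = 0) : B = 0 := by
  have hR := contDiff_expandQ hr0 hr1 hr2
  have hA := contDiff_expandQ ha0 ha1 ha2
  have hC := contDiff_expandQ hc0 hc1 hc2
  have hD := contDiff_expandQ hd0 hd1 hd2
  have hGT := hR.mul hA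
  have hGX := (hR.mul hA).mul hC
  have hGY := (hR.mul hA).mul hD
  refine coeff1_zero hε (a := A) (c := C) (Φ := fun M =>
      fderiv ℝ (fun q : ℝ × SpaceTime => expand r0 r1 r2 q.1 q.2 * expand a0 a1 a2 q.1 q.2)
        (M, z) (0, (0, 1))
    + fderiv ℝ (fun q : ℝ × SpaceTime =>
        expand r0 r1 r2 q.1 q.2 * expand a0 a1 a2 q.1 q.2 * expand c0 c1 c2 q.1 q.2)
        (M, z) (0, ((1, 0), 0))
    + fderiv ℝ (fun q : ℝ × SpaceTime =>
        expand r0 r1 r2 q.1 q.2 * expand a0 a1 a2 q.1 q.2 * expand d0 d1 d2 q.1 q.2)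
        (M, z) (0, ((0, 1), 0))) ?_ ?_
  · exact ((cont_fderiv_apply _ hGT z _).add (cont_fderiv_apply _ hGX z _)).add
      (cont_fderiv_apply _ hGY z _)
  · intro M hM
    have E := h M hM
    have hM0 : M ≠ 0 := ne_of_gt hM.1
    have e1 : pdT (fun w => expand r0 r1 r2 M w * expand a0 a1 a2 M w) z
        = fderiv ℝ (fun q : ℝ × SpaceTime =>
            expand r0 r1 r2 q.1 q.2 * expand a0 a1 a2 q.1 q.2) (M, z) (0, (0, 1)) :=
      pdT_eq _ hGT M z
    have e2 : pdX (fun w => expand r0 r1 r2 M w * expand a0 a1 a2 M w * expand c0 c1 c2 M w) z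
        = fderiv ℝ (fun q : ℝ × SpaceTime =>
            expand r0 r1 r2 q.1 q.2 * expand a0 a1 a2 q.1 q.2 * expand c0 c1 c2 q.1 q.2)
            (M, z) (0, ((1, 0), 0)) :=
      pdX_eq _ hGX M z
    have e3 : pdY (fun w => expand r0 r1 r2 M w * expand a0 a1 a2 M w * expand d0 d1 d2 M w) z
        = fderiv ℝ (fun q : ℝ × SpaceTime =>
            expand r0 r1 r2 q.1 q.2 * expand a0 a1 a2 q.1 q.2 * expand d0 d1 d2 q.1 q.2)
            (M, z) (0, ((0, 1), 0)) :=
      pdY_eq _ hGY M z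
    rw [e1, e2, e3] at E
    field_simp at E
    linear_combination E

/-- If the expanded fields satisfy the non-dimensional mixture momentum equation for
every Mach number `M ∈ (0, ε)`, then the spatial gradient of the first-order
pressure `p¹` vanishes identically. -/
theorem grad_p1_vanishes
    (ε : ℝ) (hε : 0 < ε)
    (ρ0 ρ1 ρ2 p0 p1 p2 : SpaceTime → ℝ) (u0 u1 u2 : SpaceTime → ℝ × ℝ)
    (hρ0 : ContDiff ℝ 1 ρ0) (hρ1 : ContDiff ℝ 1 ρ1) (hρ2 : ContDiff ℝ 1 ρ2)
    (hp0 : ContDiff ℝ 1 p0) (hp1 : ContDiff ℝ 1 p1) (hp2 : ContDiff ℝ 1 p2)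
    (hu0 : ContDiff ℝ 1 u0) (hu1 : ContDiff ℝ 1 u1) (hu2 : ContDiff ℝ 1 u2)
    (hmom : ∀ M : ℝ, M ∈ Set.Ioo 0 ε →
      MomentumEq (expand ρ0 ρ1 ρ2 M) (expand p0 p1 p2 M) (expandV u0 u1 u2 M) M) :
    ∀ z : SpaceTime, pdX p1 z = 0 ∧ pdY p1 z = 0 := by
  intro z
  have hc1 : ∀ M (w : SpaceTime), (expandV u0 u1 u2 M w).1
      = expand (fun w => (u0 w).1) (fun w => (u1 w).1) (fun w => (u2 w).1) M w := by
    intro M w; simp [expand, expandV]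
  have hc2 : ∀ M (w : SpaceTime), (expandV u0 u1 u2 M w).2
      = expand (fun w => (u0 w).2) (fun w => (u1 w).2) (fun w => (u2 w).2) M w := by
    intro M w; simp [expand, expandV]
  have hu01 : ContDiff ℝ 1 (fun w => (u0 w).1) := contDiff_fst.comp hu0
  have hu11 : ContDiff ℝ 1 (fun w => (u1 w).1) := contDiff_fst.comp hu1
  have hu21 : ContDiff ℝ 1 (fun w => (u2 w).1) := contDiff_fst.comp hu2
  have hu02 : ContDiff ℝ 1 (fun w => (u0 w).2) := contDiff_snd.comp hu0
  have hu12 : ContDiff ℝ 1 (fun w => (u1 w).2) := contDiff_snd.comp hu1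
  have hu22 : ContDiff ℝ 1 (fun w => (u2 w).2) := contDiff_snd.comp hu2
  constructor
  · refine comp_aux hε (A := pdX p0 z) (C := pdX p2 z) hρ0 hρ1 hρ2 hu01 hu11 hu21 hu01 hu11 hu21 hu02 hu12 hu22 z ?_
    intro M hM
    have E := (hmom M hM z).1
    rw [pdX_expand p0 p1 p2 hp0 hp1 hp2 M z] at E
    have f1 : (fun w => expand ρ0 ρ1 ρ2 M w * (expandV u0 u1 u2 M w).1)
        = fun w => expand ρ0 ρ1 ρ2 M w
            * expand (fun w => (u0 w).1) (fun w => (u1 w).1) (fun w => (u2 w).1) M w := by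
      funext w; rw [hc1]
    have f2 : (fun w => expand ρ0 ρ1 ρ2 M w * (expandV u0 u1 u2 M w).1 * (expandV u0 u1 u2 M w).1)
        = fun w => expand ρ0 ρ1 ρ2 M w
            * expand (fun w => (u0 w).1) (fun w => (u1 w).1) (fun w => (u2 w).1) M w
            * expand (fun w => (u0 w).1) (fun w => (u1 w).1) (fun w => (u2 w).1) M w := by
      funext w; rw [hc1]
    have f3 : (fun w => expand ρ0 ρ1 ρ2 M w * (expandV u0 u1 u2 M w).1 * (expandV u0 u1 u2 M w).2)
        = fun w => expand ρ0 ρ1 ρ2 M w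
            * expand (fun w => (u0 w).1) (fun w => (u1 w).1) (fun w => (u2 w).1) M w
            * expand (fun w => (u0 w).2) (fun w => (u1 w).2) (fun w => (u2 w).2) M w := by
      funext w; rw [hc1, hc2]
    rw [f1, f2, f3] at E
    exact E
  · refine comp_aux hε (A := pdY p0 z) (C := pdY p2 z) hρ0 hρ1 hρ2 hu02 hu12 hu22 hu01 hu11 hu21 hu02 hu12 hu22 z ?_
    intro M hM
    have E := (hmom M hM z).2
    rw [pdY_expand p0 p1 p2 hp0 hp1 hp2 M z] at E
    have f1 : (fun w => expand ρ0 ρ1 ρ2 M w * (expandV u0 u1 u2 M w).2)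
        = fun w => expand ρ0 ρ1 ρ2 M w
            * expand (fun w => (u0 w).2) (fun w => (u1 w).2) (fun w => (u2 w).2) M w := by
      funext w; rw [hc2]
    have f2 : (fun w => expand ρ0 ρ1 ρ2 M w * (expandV u0 u1 u2 M w).2 * (expandV u0 u1 u2 M w).1)
        = fun w => expand ρ0 ρ1 ρ2 M w
            * expand (fun w => (u0 w).2) (fun w => (u1 w).2) (fun w => (u2 w).2) M w
            * expand (fun w => (u0 w).1) (fun w => (u1 w).1) (fun w => (u2 w).1) M w := by
      funext w; rw [hc2, hc1]
    have f3 : (fun w => expand ρ0 ρ1 ρ2 M w * (expandV u0 u1 u2 M w).2 * (expandV u0 u1 u2 M w).2)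
        = fun w => expand ρ0 ρ1 ρ2 M w
            * expand (fun w => (u0 w).2) (fun w => (u1 w).2) (fun w => (u2 w).2) M w
            * expand (fun w => (u0 w).2) (fun w => (u1 w).2) (fun w => (u2 w).2) M w := by
      funext w; rw [hc2]
    rw [f1, f2, f3] at E
    exact E
end

section
/- For K = L, R, let the state vector be Q_K = (α_{1K}ρ_{1K}, α_{2K}ρ_{2K}, ρ_K u_{nK}, ρ_K u_{tK}, ρ_K E_K) ∈ ℝ⁵ with ρ_K = α_{1K}ρ_{1K} + α_{2K}ρ_{2K}, and let the normal flux be F(Q_K) = (α_{1K}ρ_{1K} u_{nK}, α_{2K}ρ_{2K} u_{nK}, ρ_K u_{nK}² + p_K, ρ_K u_{nK} u_{tK}, (ρ_K E_K + p_K) u_{nK}). Assume D := ρ_R(S_R − u_{nR}) − ρ_L(S_L − u_{nL}) ≠ 0, define S* = (p_L − p_R + ρ_R u_{nR}(S_R − u_{nR}) − ρ_L u_{nL}(S_L − u_{nL}))/D, assume S_K ≠ S* and ρ_K(S_K − u_{nK}) ≠ 0 for K = L, R, and define the HLLC star states Q*_K = ((S_K − u_{nK})/(S_K − S*)) · (α_{1K}ρ_{1K},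 α_{2K}ρ_{2K}, ρ_K S*, ρ_K u_{tK}, ρ_K (E_K + (S* − u_{nK})(S* + p_K/(ρ_K(S_K − u_{nK})))) ). Then the integral consistency condition of the HLLC solver holds componentwise in ℝ⁵: (S* − S_L) Q*_L + (S_R − S*) Q*_R = S_R Q_R − S_L Q_L − (F(Q_R) − F(Q_L)). -/
/-- State vector `Q = (α₁ρ₁, α₂ρ₂, ρ uₙ, ρ uₜ, ρE)` of the two-phase six-equation
model, with `ρ = α₁ρ₁ + α₂ρ₂`. -/
def hllcState (a1r1 a2r2 un ut E : ℝ) : Fin 5 → ℝ :=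
  ![a1r1, a2r2, (a1r1 + a2r2) * un, (a1r1 + a2r2) * ut, (a1r1 + a2r2) * E]

/-- Normal flux `F(Q) = (α₁ρ₁uₙ, α₂ρ₂uₙ, ρuₙ² + p, ρuₙuₜ, (ρE + p)uₙ)`. -/
def hllcFlux (a1r1 a2r2 un ut E p : ℝ) : Fin 5 → ℝ :=
  ![a1r1 * un, a2r2 * un, (a1r1 + a2r2) * un ^ 2 + p,
    (a1r1 + a2r2) * un * ut, ((a1r1 + a2r2) * E + p) * un]

/-- HLLC star state
`Q*_K = ((S_K − u_{nK})/(S_K − S*)) ⬝ (α₁ρ₁, α₂ρ₂, ρS*, ρuₜ, ρ(E + (S* − uₙ)(S* + p/(ρ(S_K − uₙ)))))`. -/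
noncomputable def hllcStar (a1r1 a2r2 un ut E p SK Sstar : ℝ) : Fin 5 → ℝ :=
  ((SK - un) / (SK - Sstar)) •
    ![a1r1, a2r2, (a1r1 + a2r2) * Sstar, (a1r1 + a2r2) * ut,
      (a1r1 + a2r2) *
        (E + (Sstar - un) * (Sstar + p / ((a1r1 + a2r2) * (SK - un))))]

lemma hllc_cancel (S u Sstar X : ℝ) (h : S - Sstar ≠ 0) :
    (Sstar - S) * ((S - u) / (S - Sstar) * X) = -((S - u) * X) := by
  field_simp; ring

lemma hllc_cancel' (S u Sstar X : ℝ) (h : S - Sstar ≠ 0) :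
    (S - Sstar) * ((S - u) / (S - Sstar) * X) = (S - u) * X := by
  field_simp

lemma hllc_energy (r E u S s p : ℝ) (h : r * (S - u) ≠ 0) :
    (S - u) * (r * (E + (s - u) * (s + p / (r * (S - u)))))
      = (S - u) * r * E + (s - u) * ((S - u) * r * s + p) := by
  linear_combination (s - u) * div_mul_cancel₀ p h

/-- Integral consistency condition of the HLLC solver for the two-phase
six-equation model:
`(S* − S_L) Q*_L + (S_R − S*) Q*_R = S_R Q_R − S_L Q_L − (F(Q_R) − F(Q_L))`. -/
theorem hllc_consistency
    (a1r1L a2r2L unL utL EL pL a1r1R a2r2R unR utR ER pR SL SR : ℝ)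
    (hD : (a1r1R + a2r2R) * (SR - unR) - (a1r1L + a2r2L) * (SL - unL) ≠ 0)
    (Sstar : ℝ)
    (hS : Sstar = (pL - pR + (a1r1R + a2r2R) * unR * (SR - unR)
        - (a1r1L + a2r2L) * unL * (SL - unL)) /
      ((a1r1R + a2r2R) * (SR - unR) - (a1r1L + a2r2L) * (SL - unL)))
    (hSL : SL ≠ Sstar) (hSR : SR ≠ Sstar)
    (hρL : (a1r1L + a2r2L) * (SL - unL) ≠ 0)
    (hρR : (a1r1R + a2r2R) * (SR - unR) ≠ 0) :
    (Sstar - SL) • hllcStar a1r1L a2r2L unL utL EL pL SL Sstar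
      + (SR - Sstar) • hllcStar a1r1R a2r2R unR utR ER pR SR Sstar
    = (SR • hllcState a1r1R a2r2R unR utR ER)
      - (SL • hllcState a1r1L a2r2L unL utL EL)
      - (hllcFlux a1r1R a2r2R unR utR ER pR - hllcFlux a1r1L a2r2L unL utL EL pL) := by
  have hSL' : SL - Sstar ≠ 0 := sub_ne_zero.mpr hSL
  have hSR' : SR - Sstar ≠ 0 := sub_ne_zero.mpr hSR
  have hStar : Sstar * ((a1r1R + a2r2R) * (SR - unR) - (a1r1L + a2r2L) * (SL - unL))
      = pL - pR + (a1r1R + a2r2R) * unR * (SR - unR)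
        - (a1r1L + a2r2L) * unL * (SL - unL) := by
    rw [hS, div_mul_cancel₀ _ hD]
  simp only [hllcStar, hllcState, hllcFlux, Matrix.smul_cons, smul_eq_mul, Matrix.smul_empty,
    Matrix.cons_add_cons, Matrix.cons_sub_cons, Matrix.empty_add_empty, Matrix.empty_sub_empty]
  rw [funext_iff]
  simp only [Fin.forall_fin_succ, Matrix.cons_val_zero, Matrix.cons_val_succ]
  refine ⟨?_, ?_, ?_, ?_, ?_, fun i => i.elim0⟩ <;>
    rw [hllc_cancel _ _ _ _ hSL', hllc_cancel' _ _ _ _ hSR']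
  · ring
  · ring
  · linear_combination hStar
  · ring
  · rw [hllc_energy _ _ _ _ _ _ hρL, hllc_energy _ _ _ _ _ _ hρR]
    linear_combination Sstar * hStar
end
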